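/- arXiv:2405.09295 — 3 statements merged into one kernel-verified Lean document; each statement's English description precedes it below -/
import Mathlib

section
/- Let σ : ℕ → ℕ → ℤ be the function defined on coprime pairs by σ(1,q) = 0, σ(n,q) = σ(n-2q,q) - q^2 + 1 for q odd and 2q < n, σ(n,q) = σ(n-2q,q) - q^2 for q even and 2q < n, σ(n,q) = -σ(2q-n,q) - q^2 + 1 for q odd and q ≤ n < 2q, σ(n,q) = -σ(2q-n,q) - q^2 + 2 for q even and q ≤ n < 2q, and σ(n,q) = σ(q,n) for n < q. Then for every positive integer n, σ(20n-1, 2n) = 2 - 20n^2. -/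
lemma cop_aux (n k : ℕ) (hn : 0 < n) (hk : 0 < k) :
    Nat.Coprime (2 * k * n - 1) (2 * n) := by
  have h1 : Nat.gcd (2 * k * n - 1) (2 * n) ∣ 2 * k * n - 1 := Nat.gcd_dvd_left _ _
  have h2 : Nat.gcd (2 * k * n - 1) (2 * n) ∣ 2 * n := Nat.gcd_dvd_right _ _
  have h3 : Nat.gcd (2 * k * n - 1) (2 * n) ∣ 2 * k * n := by
    have h := h2.mul_left k
    rwa [show k * (2 * n) = 2 * k * n by ring] at h
  have hpos : 1 ≤ 2 * k * n := Nat.one_le_iff_ne_zero.mpr (by positivity)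
  have h4 : 2 * k * n - (2 * k * n - 1) = 1 := by omega
  have h5 := Nat.dvd_sub h3 h1
  rw [h4] at h5
  exact Nat.dvd_one.mp h5

/-- Let `σ : ℕ → ℕ → ℤ` be the torus knot signature function, defined on coprime
pairs by the Gordon–Litherland–Murasugi recursion: `σ(1,q) = 0`,
`σ(n,q) = σ(n-2q,q) - q² + 1` for `q` odd and `2q < n`,
`σ(n,q) = σ(n-2q,q) - q²` for `q` even and `2q < n`,
`σ(n,q) = -σ(2q-n,q) - q² + 1` for `q` odd and `q ≤ n < 2q`,
`σ(n,q) = -σ(2q-n,q) - q² + 2` for `q` even and `q ≤ n < 2q`,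
and `σ(n,q) = σ(q,n)` for `n < q`.
Then for every positive integer `n`, `σ(20n-1, 2n) = 2 - 20n²`. -/
theorem signature_T_20n_sub_one_2n
    (σ : ℕ → ℕ → ℤ)
    (hbase : ∀ q, σ 1 q = 0)
    (hodd_big : ∀ n q, Nat.Coprime n q → 0 < q → 2 * q < n → Odd q →
      σ n q = σ (n - 2 * q) q - (q : ℤ) ^ 2 + 1)
    (heven_big : ∀ n q, Nat.Coprime n q → 0 < q → 2 * q < n → Even q →
      σ n q = σ (n - 2 * q) q - (q : ℤ) ^ 2)
    (hodd_mid : ∀ n q, Nat.Coprime n q → 0 < q → q ≤ n → n < 2 * q → Odd q →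
      σ n q = -σ (2 * q - n) q - (q : ℤ) ^ 2 + 1)
    (heven_mid : ∀ n q, Nat.Coprime n q → 0 < q → q ≤ n → n < 2 * q → Even q →
      σ n q = -σ (2 * q - n) q - (q : ℤ) ^ 2 + 2)
    (hswap : ∀ n q, Nat.Coprime n q → n < q → σ n q = σ q n)
    (n : ℕ) (hn : 0 < n) :
    σ (20 * n - 1) (2 * n) = 2 - 20 * (n : ℤ) ^ 2 := by
  have hev : Even (2 * n) := ⟨n, by ring⟩
  have e20 : 20 * n - 1 = 2 * 10 * n - 1 := by ring_nf
  have e16 : 20 * n - 1 - 2 * (2 * n) = 2 * 8 * n - 1 := by omega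
  have e12 : 2 * 8 * n - 1 - 2 * (2 * n) = 2 * 6 * n - 1 := by omega
  have e8 : 2 * 6 * n - 1 - 2 * (2 * n) = 2 * 4 * n - 1 := by omega
  have e4 : 2 * 4 * n - 1 - 2 * (2 * n) = 2 * 2 * n - 1 := by omega
  have e1 : 2 * (2 * n) - (2 * 2 * n - 1) = 1 := by omega
  have h20 := heven_big (20 * n - 1) (2 * n) (e20 ▸ cop_aux n 10 hn (by norm_num))
    (by omega) (by omega) hev
  have h16 := heven_big (2 * 8 * n - 1) (2 * n) (cop_aux n 8 hn (by norm_num))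
    (by omega) (by omega) hev
  have h12 := heven_big (2 * 6 * n - 1) (2 * n) (cop_aux n 6 hn (by norm_num))
    (by omega) (by omega) hev
  have h8 := heven_big (2 * 4 * n - 1) (2 * n) (cop_aux n 4 hn (by norm_num))
    (by omega) (by omega) hev
  have h4 := heven_mid (2 * 2 * n - 1) (2 * n) (cop_aux n 2 hn (by norm_num))
    (by omega) (by omega) (by omega) hev
  rw [e16] at h20
  rw [e12] at h16
  rw [e8] at h12
  rw [e4] at h8
  rw [e1, hbase] at h4
  rw [h20, h16, h12, h8, h4]
  push_cast
  ring
end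

section
/- For every positive integer n > 1, the negative (Hirzebruch–Jung) continued fraction expansion of (20n-1)/(20n-11), with all partial quotients a_i ≥ 2, is [2,...,2,3,2,...,2] with 2n-2 leading 2's, one 3, and eight trailing 2's; that is, (20n-1)/(20n-11) equals the continued fraction a_1 - 1/(a_2 - 1/(... - 1/a_m)) where (a_1,...,a_m) = (2,...,2,3,2,...,2) with 2n-2 copies of 2, then 3, then 8 copies of 2. -/
/-- Evaluation of a negative (Hirzebruch–Jung) continued fraction
`a₁ - 1/(a₂ - 1/(⋯ - 1/aₘ))` on a list of rationals (note `1/0 = 0` in `ℚ`,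
so the empty tail contributes nothing). -/
def negContFrac (l : List ℚ) : ℚ := l.foldr (fun a r => a - 1 / r) 0

lemma negContFrac_aux (k : ℕ) :
    negContFrac (List.replicate k (2 : ℚ) ++ (3 : ℚ) :: List.replicate 8 (2 : ℚ))
      = (10 * k + 19) / (10 * k + 9) := by
  induction k with
  | zero => norm_num [negContFrac, List.replicate]
  | succ k ih =>
    rw [List.replicate_succ, List.cons_append]
    unfold negContFrac at *
    rw [List.foldr_cons, ih]
    have h : (10 * (k : ℚ) + 9) ≠ 0 := by positivity
    have h2 : (10 * (k : ℚ) + 19) ≠ 0 := by positivity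
    push_cast
    field_simp
    ring

/-- For every integer `n > 1`, the negative continued fraction expansion of
`(20n-1)/(20n-11)` with all partial quotients `≥ 2` is
`[2,…,2,3,2,…,2]` with `2n-2` leading 2's, one 3, and eight trailing 2's. -/
theorem negContFrac_of_20n_sub_one (n : ℕ) (hn : 1 < n) :
    negContFrac (List.replicate (2 * n - 2) (2 : ℚ) ++ (3 : ℚ) :: List.replicate 8 (2 : ℚ))
      = (20 * (n : ℚ) - 1) / (20 * (n : ℚ) - 11) := by
  obtain ⟨m, rfl⟩ : ∃ m, n = m + 2 := ⟨n - 2, by omega⟩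
  have h : 2 * (m + 2) - 2 = 2 * m + 2 := by omega
  rw [h, negContFrac_aux]
  push_cast
  ring_nf
end

section
/- Suppose real Frøyshov invariants δ̲_R, δ̄_R : Knots → ℚ satisfy: (i) δ̄_R(K) = -δ̲_R(mirror of K); (ii) for two-bridge knots (lens space branched covers) δ̲_R(K) = δ̄_R(K) = -σ(K)/16; (iii) the cobordism inequality δ̲_R(K) - σ(Σ₂(S))/16 ≤ δ̄_R(K') whenever there is a suitable surface cobordism S from K to K' with b₂⁺(Σ₂(S)) - b₂⁺(X) = 1; (iv) if K bounds a normally immersed disk in B⁴ with only negative double points and σ(K) = 0 then δ̲_R(K) ≥ 0. If moreover δ̄_R(T_{2n,1-20n}) = -9/8 and the concordance S_n from E_{2n,1} to T_{2n,1-20n} in twice-punctured 2ℂP² has σ(Σ₂(S_n))/16 = -(4 - 20n² + 20n² - 2)/16 = -1/8, then δ̲_R(E_{2n,1}) ≤ -1, and hence E_{2n,1} does not bound a normally immersed disk in B⁴ with only negative double points. -/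
/-- Axiomatized skeleton of the proof of nonsliceness of `E_{2n,1}`.
Suppose real Frøyshov invariants `δl = δ̲_R` and `δh = δ̄_R` on a type of knots
satisfy: (i) `δ̄_R(K) = -δ̲_R(mirror K)`; (ii) for two-bridge knots
`δ̲_R(K) = δ̄_R(K) = -σ(K)/16`; (iii) the cobordism inequality
`δ̲_R(K) - σ(Σ₂(S))/16 ≤ δ̄_R(K')` whenever there is a suitable surface
cobordism `S` from `K` to `K'` (with `b₂⁺(Σ₂(S)) - b₂⁺(X) = 1`), encoded by
the relation `Cob K K' s` with `s = σ(Σ₂(S))`; and (iv) if `K` bounds a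
normally immersed disk in `B⁴` with only negative double points and
`σ(K) = 0` then `δ̲_R(K) ≥ 0`. If moreover `δ̄_R(T_{2n,1-20n}) = -9/8`, the
concordance `S_n` from `E_{2n,1}` to `T_{2n,1-20n}` satisfies
`Cob E_{2n,1} T_{2n,1-20n} 2` (i.e. `σ(Σ₂(S_n)) = 2`), and `σ(E_{2n,1}) = 0`,
then `δ̲_R(E_{2n,1}) ≤ -1`, and hence `E_{2n,1}` does not bound a normally
immersed disk in `B⁴` with only negative double points. -/
theorem cable_figure_eight_not_negative_disk
    {Knot : Type} (δl δh sig : Knot → ℚ) (mirror : Knot → Knot)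
    (TwoBridge NegDisk : Knot → Prop) (Cob : Knot → Knot → ℚ → Prop)
    (h1 : ∀ k, δh k = -δl (mirror k))
    (h2 : ∀ k, TwoBridge k → δl k = -sig k / 16 ∧ δh k = -sig k / 16)
    (h3 : ∀ k k' s, Cob k k' s → δl k - s / 16 ≤ δh k')
    (h4 : ∀ k, NegDisk k → sig k = 0 → 0 ≤ δl k)
    (E T : Knot)
    (hT : δh T = -9 / 8) (hcob : Cob E T 2) (hsigE : sig E = 0) :
    δl E ≤ -1 ∧ ¬NegDisk E := by
  have h := h3 E T 2 hcob
  rw [hT] at h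
  have hle : δl E ≤ -1 := by linarith
  exact ⟨hle, fun hn => by have := h4 E hn hsigE; linarith⟩
end
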